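/- arXiv:2307.01887 — 3 statements merged into one kernel-verified Lean document; each statement's English description precedes it below -/
import Mathlib

section
/- Let q1(α,β) = a1α² + 2b1αβ + c1β² and q2(α,β) = a2α² + 2b2αβ + c2β² be real binary quadratic forms that are not proportional. If q1 and q2 have a common nontrivial real root (α0,β0) ≠ (0,0), i.e., q1(α0,β0) = q2(α0,β0) = 0, then the Jacobian form Jac(q1,q2) has (α0,β0) as a repeated root, i.e., Jac(q1,q2) is proportional to (β0·α − α0·β)². -/
/-!
A common root `(α0, β0)` gives a common linear factor `ℓ = β0 α - α0 β` of both forms,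
`q1 = ℓ m1` and `q2 = ℓ m2`. The Jacobian is a derivation in each argument, so
`Jac(ℓ m1, ℓ m2) = ℓ² Jac(m1, m2) + ℓ (m1 Jac(ℓ, m2) - m2 Jac(ℓ, m1))`, and the Cramer relation
between three linear forms in two variables turns the second term into another `ℓ² Jac(m1, m2)`.
-/

/-- The conclusion says `a α² + 2 b α β + c β² = (β0 α - α0 β) (p α + r β)`, coefficientwise. -/
lemma exists_linear_factor_of_root {a b c α0 β0 : ℝ} (hroot : ¬(α0 = 0 ∧ β0 = 0))
    (h : a * α0 ^ 2 + 2 * b * α0 * β0 + c * β0 ^ 2 = 0) :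
    ∃ p r : ℝ, a = β0 * p ∧ b = (β0 * r - α0 * p) / 2 ∧ c = -(α0 * r) := by
  rcases not_and_or.mp hroot with hα | hβ
  · refine ⟨(β0 * (-c / α0) - 2 * b) / α0, -c / α0, ?_, ?_, ?_⟩
    · field_simp
      linear_combination h
    · field_simp
      ring
    · field_simp
  · refine ⟨a / β0, (2 * b + α0 * (a / β0)) / β0, ?_, ?_, ?_⟩
    · field_simp
    · field_simp
      ring
    · field_simp
      linear_combination h

lemma jacobian_eq_of_common_linear_factor {a1 b1 c1 a2 b2 c2 p1 r1 p2 r2 α0 β0 : ℝ}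
    (ha1 : a1 = β0 * p1) (hb1 : b1 = (β0 * r1 - α0 * p1) / 2) (hc1 : c1 = -(α0 * r1))
    (ha2 : a2 = β0 * p2) (hb2 : b2 = (β0 * r2 - α0 * p2) / 2) (hc2 : c2 = -(α0 * r2))
    (α β : ℝ) :
    (a1 * b2 - b1 * a2) * α ^ 2 + (a1 * c2 - c1 * a2) * α * β + (b1 * c2 - c1 * b2) * β ^ 2
      = (p1 * r2 - r1 * p2) / 2 * (β0 * α - α0 * β) ^ 2 := by
  subst ha1 hb1 hc1 ha2 hb2 hc2
  ring

theorem jac_repeated_root_general (a1 b1 c1 a2 b2 c2 α0 β0 : ℝ)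
    (hroot : ¬(α0 = 0 ∧ β0 = 0))
    (h1 : a1 * α0 ^ 2 + 2 * b1 * α0 * β0 + c1 * β0 ^ 2 = 0)
    (h2 : a2 * α0 ^ 2 + 2 * b2 * α0 * β0 + c2 * β0 ^ 2 = 0) :
    ∃ lam : ℝ, ∀ α β : ℝ,
      (a1 * b2 - b1 * a2) * α ^ 2 + (a1 * c2 - c1 * a2) * α * β + (b1 * c2 - c1 * b2) * β ^ 2
        = lam * (β0 * α - α0 * β) ^ 2 := by
  obtain ⟨p1, r1, ha1, hb1, hc1⟩ := exists_linear_factor_of_root hroot h1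
  obtain ⟨p2, r2, ha2, hb2, hc2⟩ := exists_linear_factor_of_root hroot h2
  exact ⟨_, jacobian_eq_of_common_linear_factor ha1 hb1 hc1 ha2 hb2 hc2⟩

/-- If two non-proportional real binary quadratic forms have a
common nontrivial real root `(α0, β0)`, then their Jacobian form has `(α0, β0)`
as a repeated root, i.e. it is proportional to `(β0·α - α0·β)²`. -/
theorem jac_repeated_root (a1 b1 c1 a2 b2 c2 α0 β0 : ℝ)
    (hnp : ¬ ∃ s t : ℝ, ¬(s = 0 ∧ t = 0) ∧ s * a1 + t * a2 = 0 ∧ s * b1 + t * b2 = 0 ∧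
      s * c1 + t * c2 = 0)
    (hroot : ¬(α0 = 0 ∧ β0 = 0))
    (h1 : a1 * α0 ^ 2 + 2 * b1 * α0 * β0 + c1 * β0 ^ 2 = 0)
    (h2 : a2 * α0 ^ 2 + 2 * b2 * α0 * β0 + c2 * β0 ^ 2 = 0) :
    ∃ lam : ℝ, ∀ α β : ℝ,
      (a1 * b2 - b1 * a2) * α ^ 2 + (a1 * c2 - c1 * a2) * α * β + (b1 * c2 - c1 * b2) * β ^ 2
        = lam * (β0 * α - α0 * β) ^ 2 :=
  jac_repeated_root_general a1 b1 c1 a2 b2 c2 α0 β0 hroot h1 h2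
end

section
/- Let Q1, Q2 be real binary quadratic forms satisfying the polarity condition P(Q1,Q2) = 0 (where P((A,2B,C),(a,2b,c)) = 2Bb − Ac − Ca), let r ∈ ℝ, Q3 = Q2 − r·Q1, Q4 = Jac(Q1,Q2), and Q5 = Jac(Q3,Q4). Then Q5 = −δ(Q2)·Q1 − r·δ(Q1)·Q2, and δ(Q5) = δ(Q1)·δ(Q2)·δ(Q3), where δ(Q3) = δ(Q2) + r²δ(Q1). -/
/-! Both `Jac(p, Jac(p, q))` and `Jac(q, Jac(p, q))` are combinations of `p` and `q` in which
`P(p, q)` enters only as a coefficient, so by bilinearity of `Jac` and polarity,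
`Jac(Q2 - r·Q1, Jac(Q1, Q2))` collapses to `-δ(Q2)·Q1 - r·δ(Q1)·Q2`. The discriminant is a
quadratic form with polarization `-P`, hence additive on `x·Q1 - y·Q2` for polar `Q1, Q2`; this
gives both discriminant identities. -/

/-- A binary quadratic form as a coefficient triple `(coef α², coef αβ, coef β²)`;
for `q = (a, 2b, c)` the discriminant is `δ(q) = b² - ac`. -/
noncomputable def qDelta (q : ℝ × ℝ × ℝ) : ℝ := (q.2.1 / 2) ^ 2 - q.1 * q.2.2

/-- The Jacobian of forms `(a1, 2b1, c1)` and `(a2, 2b2, c2)`: the triple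
`(a1b2 - b1a2, a1c2 - c1a2, b1c2 - c1b2)`. -/
noncomputable def qJac (p q : ℝ × ℝ × ℝ) : ℝ × ℝ × ℝ :=
  (p.1 * (q.2.1 / 2) - (p.2.1 / 2) * q.1,
   p.1 * q.2.2 - p.2.2 * q.1,
   (p.2.1 / 2) * q.2.2 - p.2.2 * (q.2.1 / 2))

/-- The polarity pairing of forms `(A, 2B, C)` and `(a, 2b, c)`:
`P = 2Bb - Ac - Ca`. -/
noncomputable def qPol (p q : ℝ × ℝ × ℝ) : ℝ :=
  2 * (p.2.1 / 2) * (q.2.1 / 2) - p.1 * q.2.2 - q.1 * p.2.2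

theorem qPol_comm (p q : ℝ × ℝ × ℝ) : qPol p q = qPol q p := by
  simp only [qPol]; ring

theorem qDelta_smul_sub_smul (x y : ℝ) (p q : ℝ × ℝ × ℝ) :
    qDelta (x • p - y • q) = x ^ 2 * qDelta p + y ^ 2 * qDelta q - x * y * qPol p q := by
  simp only [qDelta, qPol, Prod.fst_sub, Prod.snd_sub, Prod.smul_fst, Prod.smul_snd, smul_eq_mul]
  ring

theorem qJac_sub_smul_left (r : ℝ) (p q s : ℝ × ℝ × ℝ) :
    qJac (q - r • p) s = qJac q s - r • qJac p s := by
  ext <;>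
    simp only [qJac, Prod.fst_sub, Prod.snd_sub, Prod.smul_fst, Prod.smul_snd, smul_eq_mul] <;>
    ring

theorem qJac_left_qJac_self (p q : ℝ × ℝ × ℝ) :
    qJac p (qJac p q) = qDelta p • q - (qPol p q / 2) • p := by
  ext <;>
    simp only [qJac, qDelta, qPol, Prod.fst_sub, Prod.snd_sub, Prod.smul_fst, Prod.smul_snd,
      smul_eq_mul] <;>
    ring

theorem qJac_right_qJac_self (p q : ℝ × ℝ × ℝ) :
    qJac q (qJac p q) = (qPol p q / 2) • q - qDelta q • p := by
  ext <;>
    simp only [qJac, qDelta, qPol, Prod.fst_sub, Prod.snd_sub, Prod.smul_fst, Prod.smul_snd,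
      smul_eq_mul] <;>
    ring

/-- if `P(Q1,Q2) = 0`, `Q3 = Q2 - r·Q1`, `Q4 = Jac(Q1,Q2)` and
`Q5 = Jac(Q3,Q4)`, then `Q5 = -δ(Q2)·Q1 - r·δ(Q1)·Q2`,
`δ(Q5) = δ(Q1)·δ(Q2)·δ(Q3)` and `δ(Q3) = δ(Q2) + r²·δ(Q1)`. -/
theorem characteristic_form_identities (Q1 Q2 Q3 Q4 Q5 : ℝ × ℝ × ℝ) (r : ℝ)
    (hP : qPol Q1 Q2 = 0) (hQ3 : Q3 = Q2 - r • Q1) (hQ4 : Q4 = qJac Q1 Q2)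
    (hQ5 : Q5 = qJac Q3 Q4) :
    Q5 = -(qDelta Q2 • Q1) - (r * qDelta Q1) • Q2 ∧
    qDelta Q5 = qDelta Q1 * qDelta Q2 * qDelta Q3 ∧
    qDelta Q3 = qDelta Q2 + r ^ 2 * qDelta Q1 := by
  have hQ5_eq : Q5 = -(qDelta Q2 • Q1) - (r * qDelta Q1) • Q2 := by
    rw [hQ5, hQ3, hQ4, qJac_sub_smul_left, qJac_right_qJac_self, qJac_left_qJac_self, hP]
    module
  have hQ3_delta : qDelta Q3 = qDelta Q2 + r ^ 2 * qDelta Q1 := by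
    have h := qDelta_smul_sub_smul 1 r Q2 Q1
    rw [one_smul, qPol_comm, hP] at h
    rw [hQ3, h]
    ring
  refine ⟨hQ5_eq, ?_, hQ3_delta⟩
  rw [hQ5_eq, ← neg_smul, qDelta_smul_sub_smul, hP, hQ3_delta]
  ring
end

section
/- Let Q1 be a positive definite real binary quadratic form and Q2 a form with δ(Q2) > 0 (where δ(a,2b,c) = b² − ac), satisfying P(Q1,Q2) = 0, let r ∈ ℝ with r ≠ 0, Q3 = Q2 − rQ1 and Q5 = Jac(Q3, Jac(Q1,Q2)). Then exactly one of δ(Q3) > 0 or δ(Q5) > 0 holds, or both equal zero; more precisely δ(Q5) = δ(Q1)δ(Q2)δ(Q3) with δ(Q1) < 0 and δ(Q2) > 0, so δ(Q5) and δ(Q3) have opposite signs (and vanish simultaneously). Hence when Q3 = 0 has two real root directions (torsal directions), Q5 = 0 has none (characteristic directions are imaginary), and vice versa. -/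
/-- Evaluation of the coefficient triple as a quadratic form. -/
noncomputable def qEval (q : ℝ × ℝ × ℝ) (x y : ℝ) : ℝ :=
  q.1 * x ^ 2 + q.2.1 * x * y + q.2.2 * y ^ 2

theorem qDelta_qJac (p q : ℝ × ℝ × ℝ) :
    qDelta (qJac p q) = qPol p q ^ 2 / 4 - qDelta p * qDelta q := by
  simp only [qDelta, qJac, qPol]
  ring

theorem qPol_qJac_left (p q : ℝ × ℝ × ℝ) : qPol p (qJac p q) = 0 := by
  simp only [qPol, qJac]
  ring

theorem qPol_qJac_right (p q : ℝ × ℝ × ℝ) : qPol q (qJac p q) = 0 := by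
  simp only [qPol, qJac]
  ring

theorem qPol_sub_smul_left (p q s : ℝ × ℝ × ℝ) (r : ℝ) :
    qPol (p - r • q) s = qPol p s - r * qPol q s := by
  simp only [qPol, Prod.fst_sub, Prod.snd_sub, Prod.smul_fst, Prod.smul_snd, smul_eq_mul]
  ring

theorem qDelta_neg_of_qEval_pos {q : ℝ × ℝ × ℝ}
    (hpos : ∀ x y : ℝ, ¬(x = 0 ∧ y = 0) → 0 < qEval q x y) : qDelta q < 0 := by
  obtain ⟨a, p, c⟩ := q
  have ha : 0 < a := by simpa [qEval] using hpos 1 0 (by norm_num)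
  have h := hpos (-p / 2) a (fun h => ha.ne' h.2)
  have hval : qEval (a, p, c) (-p / 2) a = -a * qDelta (a, p, c) := by
    simp only [qEval, qDelta]
    ring
  rw [hval] at h
  exact neg_of_mul_pos_right h (neg_nonpos.mpr ha.le)

theorem torsal_characteristic_opposite_general (Q1 Q2 Q3 Q5 : ℝ × ℝ × ℝ) (r : ℝ)
    (hpos : ∀ x y : ℝ, ¬(x = 0 ∧ y = 0) → 0 < qEval Q1 x y)
    (hδ2 : 0 < qDelta Q2) (hP : qPol Q1 Q2 = 0)
    (hQ3 : Q3 = Q2 - r • Q1) (hQ5 : Q5 = qJac Q3 (qJac Q1 Q2)) :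
    qDelta Q5 = qDelta Q1 * qDelta Q2 * qDelta Q3 ∧ qDelta Q1 < 0 ∧
    (0 < qDelta Q3 ↔ qDelta Q5 < 0) ∧ (qDelta Q3 = 0 ↔ qDelta Q5 = 0) ∧
    (qDelta Q3 < 0 ↔ 0 < qDelta Q5) := by
  have hδ1 : qDelta Q1 < 0 := qDelta_neg_of_qEval_pos hpos
  have hQ3_perp : qPol Q3 (qJac Q1 Q2) = 0 := by
    rw [hQ3, qPol_sub_smul_left, qPol_qJac_left, qPol_qJac_right, mul_zero, sub_zero]
  have hδ5 : qDelta Q5 = qDelta Q1 * qDelta Q2 * qDelta Q3 := by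
    rw [hQ5, qDelta_qJac, qDelta_qJac, hQ3_perp, hP]
    ring
  have hu : qDelta Q1 * qDelta Q2 < 0 := mul_neg_of_neg_of_pos hδ1 hδ2
  rw [hδ5]
  exact ⟨rfl, hδ1, (smul_neg_iff_of_neg_left hu).symm, (mul_eq_zero_iff_left hu.ne).symm,
    (smul_pos_iff_of_neg_left hu).symm⟩

/-- for `Q1` positive definite, `δ(Q2) > 0`, `P(Q1,Q2) = 0`,
`r ≠ 0`, `Q3 = Q2 - r·Q1` and `Q5 = Jac(Q3, Jac(Q1,Q2))`:
`δ(Q5) = δ(Q1)·δ(Q2)·δ(Q3)` with `δ(Q1) < 0` and `δ(Q2) > 0`, so `δ(Q5)` and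
`δ(Q3)` have opposite signs and vanish simultaneously: when the torsal
directions (`Q3 = 0`) are real the characteristic ones (`Q5 = 0`) are
imaginary and vice versa. -/
theorem torsal_characteristic_opposite (Q1 Q2 Q3 Q5 : ℝ × ℝ × ℝ) (r : ℝ) (hr : r ≠ 0)
    (hpos : ∀ x y : ℝ, ¬(x = 0 ∧ y = 0) → 0 < qEval Q1 x y)
    (hδ2 : 0 < qDelta Q2) (hP : qPol Q1 Q2 = 0)
    (hQ3 : Q3 = Q2 - r • Q1) (hQ5 : Q5 = qJac Q3 (qJac Q1 Q2)) :
    qDelta Q5 = qDelta Q1 * qDelta Q2 * qDelta Q3 ∧ qDelta Q1 < 0 ∧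
    (0 < qDelta Q3 ↔ qDelta Q5 < 0) ∧ (qDelta Q3 = 0 ↔ qDelta Q5 = 0) ∧
    (qDelta Q3 < 0 ↔ 0 < qDelta Q5) :=
  torsal_characteristic_opposite_general Q1 Q2 Q3 Q5 r hpos hδ2 hP hQ3 hQ5
end
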